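/- Let M be a monoid (not necessarily commutative), V : ℕ → M, and for natural numbers a, b define P a b = V a * V (a+1) * ⋯ * V (b−1), with P a b = 1 when a ≥ b; ∸ denotes truncated natural subtraction. Define W : ℕ → ℕ → M by W 1 r = P (r ∸ 1) r, and for k ≥ 1: W (k+1) r = (if r ≥ 2^k then (W k (r − 2^k) * V (r − 2^k)) * W k r else W k r). Then for every p ≥ 1, every q with 2^q ≥ p, and every r with 1 ≤ r ≤ p − 1: W q r = P 0 r. In particular, the two-⊕ doubling exclusive scan completes in ⌈log₂ p⌉ communication rounds. -/

import Mathlib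

/-- The ordered product `V a * V (a+1) * ⋯ * V (b−1)` over indices in `[a, b)`,
equal to `1` when `a ≥ b`. -/
def orderedProd {M : Type*} [Monoid M] (V : ℕ → M) (a b : ℕ) : M :=
  ((List.range' a (b - a)).map V).prod

lemma orderedProd_append {M : Type*} [Monoid M] (V : ℕ → M) {a b c : ℕ}
    (hab : a ≤ b) (hbc : b ≤ c) :
    orderedProd V a b * orderedProd V b c = orderedProd V a c := by
  unfold orderedProd
  rw [← List.prod_append, ← List.map_append]
  have : List.range' a (b - a) ++ List.range' b (c - b)
      = List.range' a (c - a) := by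
    have := List.range'_append (s := a) (m := b - a) (n := c - b) (step := 1)
    simp only [one_mul, mul_one] at this
    rw [show a + (b - a) = b by omega] at this
    rw [this, show b - a + (c - b) = c - a by omega]
  rw [this]

lemma orderedProd_single {M : Type*} [Monoid M] (V : ℕ → M) (b : ℕ) :
    orderedProd V b (b + 1) = V b := by
  simp [orderedProd]

/-- Correctness of the two-⊕ doubling exclusive scan algorithm: with
`W 1 r = P (r ∸ 1) r` and, for `k ≥ 1`,
`W (k+1) r = (W k (r − 2^k) * V (r − 2^k)) * W k r` when `r ≥ 2^k` (else
unchanged), for every `p ≥ 1` and every `q` with `2^q ≥ p`, every processor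
`1 ≤ r ≤ p − 1` holds its exclusive prefix product `W q r = V 0 * ⋯ * V (r−1)`;
in particular `⌈log₂ p⌉` communication rounds suffice. -/
theorem twoplus_correct {M : Type*} [Monoid M] (V : ℕ → M) (W : ℕ → ℕ → M)
    (h1 : ∀ r, W 1 r = orderedProd V (r - 1) r)
    (hstep : ∀ k r, 1 ≤ k →
      W (k + 1) r =
        if 2 ^ k ≤ r then (W k (r - 2 ^ k) * V (r - 2 ^ k)) * W k r else W k r) :
    (∀ p q r, 1 ≤ p → p ≤ 2 ^ q → 1 ≤ r → r ≤ p - 1 → W q r = orderedProd V 0 r) ∧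
    (∀ p r, 1 ≤ p → 1 ≤ r → r ≤ p - 1 → W (Nat.clog 2 p) r = orderedProd V 0 r) := by
  have key : ∀ k, 1 ≤ k → ∀ r, W k r = orderedProd V (r - (2 ^ k - 1)) r := by
    intro k
    induction k with
    | zero => omega
    | succ k ih =>
      intro _ r
      rcases Nat.eq_or_lt_of_le (Nat.one_le_iff_ne_zero.mpr (Nat.succ_ne_zero k)) with h | h
      · have hk0 : k = 0 := by omega
        subst hk0; simpa using h1 r
      have hk : 1 ≤ k := by omega
      have hpow : 1 ≤ 2 ^ k := Nat.one_le_two_pow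
      have hpow2 : 2 ^ (k + 1) = 2 ^ k + 2 ^ k := by ring
      rw [hstep k r hk]
      by_cases hr : 2 ^ k ≤ r
      · rw [if_pos hr, ih hk, ih hk]
        have e1 : orderedProd V (r - 2 ^ k - (2 ^ k - 1)) (r - 2 ^ k) * V (r - 2 ^ k)
            = orderedProd V (r - 2 ^ k - (2 ^ k - 1)) (r - 2 ^ k + 1) := by
          rw [← orderedProd_single V (r - 2 ^ k)]
          exact orderedProd_append V (by omega) (by omega)
        rw [e1, show r - 2 ^ k + 1 = r - (2 ^ k - 1) by omega]
        rw [orderedProd_append V (by omega) (by omega)]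
        congr 1
        omega
      · rw [if_neg hr, ih hk]
        congr 1
        omega
  constructor
  · intro p q r hp hpq hr hrp
    have hq : 1 ≤ q := by
      by_contra h
      interval_cases q <;> omega
    have hq2 : 2 ≤ 2 ^ q := by
      calc 2 = 2 ^ 1 := by norm_num
        _ ≤ 2 ^ q := Nat.pow_le_pow_right (by norm_num) hq
    rw [key q hq r, show r - (2 ^ q - 1) = 0 by omega]
  · intro p r hp hr hrp
    have hq : 1 ≤ Nat.clog 2 p := by
      have : 2 ≤ p := by omega
      exact Nat.one_le_iff_ne_zero.mpr (by
        have := Nat.clog_pos (by norm_num : 1 < 2) this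
        omega)
    have hle : p ≤ 2 ^ Nat.clog 2 p := Nat.le_pow_clog (by norm_num) p
    have hq2 : 2 ≤ 2 ^ Nat.clog 2 p := by
      calc 2 = 2 ^ 1 := by norm_num
        _ ≤ _ := Nat.pow_le_pow_right (by norm_num) hq
    rw [key _ hq r, show r - (2 ^ Nat.clog 2 p - 1) = 0 by omega]
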